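/- arXiv:2204.07196 — 6 statements merged into one kernel-verified Lean document; each statement's English description precedes it below -/
import Mathlib

section
/- Let f : ℝ → [−1,1] be a Lipschitz continuous function, let d ≥ 1 be an integer and w ≥ 1 a real number, and let f_d be the degree-d Chebyshev projection of f on the window [−w,w]. Then there is an absolute constant C > 0 such that every coefficient of f_d, viewed as a polynomial in x, has magnitude at most C·d·3^d. -/
/-!
Since `|f| ≤ 1`, `|T_k| ≤ 1` on `[-1, 1]` and the Chebyshev weight `(1 - y²)^(-1/2)` has total
mass `π`, every Chebyshev coefficient satisfies `|a_k| ≤ 2`. The recurrence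
`T_{k+2} = 2 X T_{k+1} - T_k` bounds the monomial coefficients of `T_k` by `3^k`, and the
substitution `x ↦ x / w` with `w ≥ 1` only shrinks them. Summing the `d + 1` terms gives
`2 (d + 1) 3^d ≤ 4 d 3^d`.
-/

open MeasureTheory Polynomial

/-- The `k`-th Chebyshev coefficient of `f` on the window `[-w, w]`:
`a_k := ((1 + 1_{k>0})/π) ∫_{−1}^{1} f(wy) T_k(y)/√(1−y²) dy`. -/
noncomputable def chebCoeff (f : ℝ → ℝ) (w : ℝ) (k : ℕ) : ℝ :=
  ((if k = 0 then 1 else 2) / Real.pi) *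
    ∫ y in (-1 : ℝ)..1, f (w * y) * (Polynomial.Chebyshev.T ℝ k).eval y / Real.sqrt (1 - y ^ 2)

/-- The degree-`d` Chebyshev projection of `f` on the window `[-w, w]`, viewed as a polynomial
in `x`: `f_d(x) := Σ_{k=0}^d a_k T_k(x/w)`. -/
noncomputable def chebProj (f : ℝ → ℝ) (w : ℝ) (d : ℕ) : Polynomial ℝ :=
  ∑ k ∈ Finset.range (d + 1),
    Polynomial.C (chebCoeff f w k) *
      (Polynomial.Chebyshev.T ℝ k).comp (Polynomial.C w⁻¹ * Polynomial.X)

open Polynomial.Chebyshev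

lemma abs_coeff_X_mul_le {p : ℝ[X]} {B : ℝ} (hB : 0 ≤ B) (hp : ∀ i, |p.coeff i| ≤ B)
    (j : ℕ) :
    |(X * p).coeff j| ≤ B := by
  cases j with
  | zero => simpa using hB
  | succ i => simpa [coeff_X_mul] using hp i

theorem abs_coeff_T_real_le (n j : ℕ) : |(T ℝ n).coeff j| ≤ 3 ^ n := by
  induction n using Nat.twoStepInduction generalizing j with
  | zero =>
    simp only [Nat.cast_zero, T_zero, coeff_one, pow_zero]
    split_ifs <;> norm_num
  | one =>
    simp only [Nat.cast_one, T_one, coeff_X, pow_one]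
    split_ifs <;> norm_num
  | more n ih₀ ih₁ =>
    have hX := abs_coeff_X_mul_le (by positivity) ih₁ j
    have hrec : (T ℝ (n + 2 : ℕ)).coeff j =
        2 * (X * T ℝ (n + 1 : ℕ)).coeff j - (T ℝ n).coeff j := by
      push_cast
      rw [T_add_two, coeff_sub, mul_assoc, coeff_ofNat_mul]
    calc |(T ℝ (n + 2 : ℕ)).coeff j|
        ≤ 2 * |(X * T ℝ (n + 1 : ℕ)).coeff j| + |(T ℝ n).coeff j| := by
          rw [hrec]
          exact (abs_sub _ _).trans (by rw [abs_mul, abs_two])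
      _ ≤ 2 * 3 ^ (n + 1) + 3 ^ n := by gcongr; exact ih₀ j
      _ ≤ 3 ^ (n + 2) := by ring_nf; linarith [pow_pos (three_pos : (0:ℝ) < 3) n]

theorem integral_sqrt_one_sub_sq_inv :
    ∫ x in (-1 : ℝ)..1, √(1 - x ^ 2)⁻¹ = Real.pi := by
  rw [← integral_eval_T_real_measureT_zero, integral_measureT]
  simp

theorem abs_chebCoeff_le {f : ℝ → ℝ} {M : ℝ} (hf : ∀ x, |f x| ≤ M) (w : ℝ) (k : ℕ) :
    |chebCoeff f w k| ≤ 2 * M := by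
  have hM : 0 ≤ M := (abs_nonneg _).trans (hf 0)
  have hpoint : ∀ y ∈ Set.Icc (-1 : ℝ) 1,
      ‖f (w * y) * (T ℝ k).eval y / √(1 - y ^ 2)‖ ≤ M * √(1 - y ^ 2)⁻¹ := by
    intro y hy
    rw [Real.sqrt_inv, Real.norm_eq_abs, div_eq_mul_inv, abs_mul, abs_mul, abs_inv,
      abs_of_nonneg (Real.sqrt_nonneg _)]
    have hT := abs_eval_T_real_le_one k (abs_le.mpr hy)
    gcongr
    calc |f (w * y)| * |(T ℝ k).eval y| ≤ M * 1 := by gcongr; exact hf _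
      _ = M := mul_one M
  have hint :
      |∫ y in (-1 : ℝ)..1, f (w * y) * (T ℝ k).eval y / √(1 - y ^ 2)| ≤ M * Real.pi := by
    have h := intervalIntegral.norm_integral_le_abs_of_norm_le
      (f := fun y => f (w * y) * (T ℝ k).eval y / √(1 - y ^ 2))
      (g := fun y => M * √(1 - y ^ 2)⁻¹)
      ?_ (intervalIntegrable_sqrt_one_sub_sq_inv.const_mul M)
    · rwa [intervalIntegral.integral_const_mul, integral_sqrt_one_sub_sq_inv,
        abs_of_nonneg (by positivity)] at h
    · rw [Set.uIoc_of_le (by norm_num)]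
      filter_upwards [ae_restrict_mem measurableSet_Ioc] with y hy
      exact hpoint y (Set.Ioc_subset_Icc_self hy)
  have hfactor : |(if k = 0 then 1 else 2 : ℝ) / Real.pi| ≤ 2 / Real.pi := by
    rw [abs_div, abs_of_pos Real.pi_pos]
    gcongr
    split_ifs <;> norm_num
  calc |chebCoeff f w k| ≤ 2 / Real.pi * (M * Real.pi) := by
        rw [chebCoeff, abs_mul]
        gcongr
    _ = 2 * M := by field_simp

theorem coeff_chebProj (f : ℝ → ℝ) (w : ℝ) (d j : ℕ) :
    (chebProj f w d).coeff j =
      ∑ k ∈ Finset.range (d + 1), chebCoeff f w k * (T ℝ k).coeff j * w⁻¹ ^ j := by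
  simp [chebProj, mul_assoc]

theorem abs_coeff_chebProj_le {f : ℝ → ℝ} {M w : ℝ} (hf : ∀ x, |f x| ≤ M) (hw : 1 ≤ w)
    (d j : ℕ) :
    |(chebProj f w d).coeff j| ≤ (d + 1) * (2 * M * 3 ^ d) := by
  have hM : 0 ≤ M := (abs_nonneg _).trans (hf 0)
  have hwj : |w⁻¹ ^ j| ≤ 1 := by
    rw [abs_pow, abs_inv, abs_of_pos (by linarith)]
    exact pow_le_one₀ (by positivity) (inv_le_one_of_one_le₀ hw)
  have hterm : ∀ k ∈ Finset.range (d + 1),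
      |chebCoeff f w k * (T ℝ k).coeff j * w⁻¹ ^ j| ≤ 2 * M * 3 ^ d := by
    intro k hk
    have hkd : k ≤ d := Nat.lt_succ_iff.mp (Finset.mem_range.mp hk)
    have ha := abs_chebCoeff_le hf w k
    have hT := abs_coeff_T_real_le k j
    have h3 : (3 : ℝ) ^ k ≤ 3 ^ d := pow_le_pow_right₀ (by norm_num) hkd
    rw [abs_mul, abs_mul]
    calc |chebCoeff f w k| * |(T ℝ k).coeff j| * |w⁻¹ ^ j| ≤ 2 * M * 3 ^ k * 1 := by
          gcongr
      _ ≤ 2 * M * 3 ^ d := by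
          rw [mul_one]
          gcongr
  rw [coeff_chebProj]
  calc _ ≤ ∑ k ∈ Finset.range (d + 1), |chebCoeff f w k * (T ℝ k).coeff j * w⁻¹ ^ j| :=
        Finset.abs_sum_le_sum_abs _ _
    _ ≤ ∑ _k ∈ Finset.range (d + 1), 2 * M * 3 ^ d := Finset.sum_le_sum hterm
    _ = (d + 1) * (2 * M * 3 ^ d) := by simp

/-- **Chebyshev projections of bounded Lipschitz functions have small coefficients.**
There is an absolute constant `C > 0` such that for every Lipschitz continuous
`f : ℝ → [−1,1]`, integer `d ≥ 1`, and real `w ≥ 1`, every coefficient of the degree-`d`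
Chebyshev projection of `f` on the window `[−w,w]`, viewed as a polynomial in `x`, has magnitude
at most `C·d·3^d`. -/
theorem chebProj_coeff_bound :
    ∃ C : ℝ, 0 < C ∧
      ∀ (f : ℝ → ℝ), (∃ K : NNReal, LipschitzWith K f) → (∀ x, f x ∈ Set.Icc (-1 : ℝ) 1) →
        ∀ (d : ℕ), 1 ≤ d → ∀ (w : ℝ), 1 ≤ w →
          ∀ j : ℕ, |(chebProj f w d).coeff j| ≤ C * d * 3 ^ d := by
  refine ⟨4, by norm_num, fun f _ hf d hd w hw j => ?_⟩
  have hd' : (d : ℝ) + 1 ≤ 2 * d := by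
    have : (1 : ℝ) ≤ d := by exact_mod_cast hd
    linarith
  calc |(chebProj f w d).coeff j| ≤ (d + 1) * (2 * 1 * 3 ^ d) :=
        abs_coeff_chebProj_le (fun x => abs_le.mpr (hf x)) hw d j
    _ ≤ 2 * d * (2 * 1 * 3 ^ d) := by gcongr
    _ = 4 * d * 3 ^ d := by ring
end

section
/- There is an absolute constant C > 0 such that the following holds. Let n and Δ be positive integers, let ∏_{i=1}^n x_i^{α_i} be a monomial of total degree at most Δ, and let t be a real number with t ≥ 2√Δ + 1. Then |E_{x∼N(0,I_{n×n})}[∏_{i=1}^n x_i^{α_i} ∣ ∀i: |x_i| ≤ t] − E_{x∼N(0,I_{n×n})}[∏_{i=1}^n x_i^{α_i}]| ≤ C·2^Δ·Δ^{(Δ+2)/2}·t^Δ·e^{−t²/2}. -/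
/-!
Truncating to the box `{x | ∀ i, |x i| ≤ t}` keeps the coordinates independent, so both
expectations factor into one-dimensional moments, and a telescoping estimate reduces the claim to
comparing the moment of `N(0,1)` conditioned on `[-t, t]` with the untruncated one. These differ
by the tail `∫_{|x|>t} |x|^k dγ` plus the lost mass `γ(|x| > t)` times `E|x|^k`. For `t² ≥ k + t`
the tail is at most `t^k e^{-t²/2}` (compare `x^k e^{-x²/2}` with `t^k e^{-t²/2} e^{-(x-t)}`),
and `E|x|^k ≤ √2 k^{k/2}` follows from the pointwise bound `|x|^k ≤ k^{k/2} e^{x²/4}`.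
-/

open MeasureTheory ProbabilityTheory

/-- The standard Gaussian distribution `N(0, I_{n×n})` on `ℝⁿ`, as the product of `n` copies of
the standard normal distribution on `ℝ`. -/
noncomputable def stdGaussian (n : ℕ) : Measure (Fin n → ℝ) :=
  Measure.pi fun _ => gaussianReal 0 1

open Real Set

lemma abs_prod_sub_prod_le {ι : Type*} (s : Finset ι) {a b c : ι → ℝ}
    (hc : ∀ i ∈ s, 1 ≤ c i) (ha : ∀ i ∈ s, |a i| ≤ c i) (hb : ∀ i ∈ s, |b i| ≤ c i) :
    |∏ i ∈ s, a i - ∏ i ∈ s, b i| ≤ (∑ i ∈ s, |a i - b i|) * ∏ i ∈ s, c i := by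
  induction s using Finset.cons_induction with
  | empty => simp
  | cons j s _ ih =>
    simp only [Finset.forall_mem_cons] at hc ha hb
    simp only [Finset.prod_cons, Finset.sum_cons]
    have hC : 1 ≤ ∏ i ∈ s, c i := by
      simpa using Finset.prod_le_prod (fun _ _ => zero_le_one) hc.2
    have hA : |∏ i ∈ s, a i| ≤ ∏ i ∈ s, c i := by
      rw [Finset.abs_prod]
      exact Finset.prod_le_prod (fun i _ => abs_nonneg _) ha.2
    have hIH := ih hc.2 ha.2 hb.2
    calc |a j * ∏ i ∈ s, a i - b j * ∏ i ∈ s, b i|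
        = |(a j - b j) * ∏ i ∈ s, a i + b j * (∏ i ∈ s, a i - ∏ i ∈ s, b i)| := by ring_nf
      _ ≤ |a j - b j| * ∏ i ∈ s, c i + c j * ((∑ i ∈ s, |a i - b i|) * ∏ i ∈ s, c i) := by
        refine (abs_add_le _ _).trans ?_
        rw [abs_mul, abs_mul]
        exact add_le_add (mul_le_mul_of_nonneg_left hA (abs_nonneg _))
          (mul_le_mul hb.1 hIH (abs_nonneg _) (by linarith [hc.1]))
      _ ≤ (|a j - b j| + ∑ i ∈ s, |a i - b i|) * (c j * ∏ i ∈ s, c i) := by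
        nlinarith [mul_nonneg (mul_nonneg (abs_nonneg (a j - b j)) (by linarith : 0 ≤ ∏ i ∈ s, c i))
          (sub_nonneg.2 hc.1)]

lemma abs_setIntegral_div_measureReal_sub_integral_le {α : Type*} [MeasurableSpace α]
    {μ : Measure α} [IsProbabilityMeasure μ] {s : Set α} (hs : MeasurableSet s)
    (hμs : 0 < μ.real s) {f : α → ℝ} (hf : Integrable f μ) :
    |(∫ x in s, f x ∂μ) / μ.real s - ∫ x, f x ∂μ|
      ≤ (∫ x in sᶜ, |f x| ∂μ + μ.real sᶜ * ∫ x, |f x| ∂μ) / μ.real s := by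
  have hsplit := integral_add_compl hs hf
  have hmass := measureReal_add_measureReal_compl (μ := μ) hs
  rw [probReal_univ] at hmass
  have hdiff : (∫ x in s, f x ∂μ) / μ.real s - ∫ x, f x ∂μ
      = (μ.real sᶜ * ∫ x, f x ∂μ - ∫ x in sᶜ, f x ∂μ) / μ.real s := by
    rw [eq_div_iff hμs.ne', sub_mul, div_mul_cancel₀ _ hμs.ne']
    linear_combination hsplit - (∫ x, f x ∂μ) * hmass
  rw [hdiff, abs_div, abs_of_pos hμs]
  gcongr
  calc |μ.real sᶜ * ∫ x, f x ∂μ - ∫ x in sᶜ, f x ∂μ|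
      ≤ μ.real sᶜ * |∫ x, f x ∂μ| + |∫ x in sᶜ, f x ∂μ| := by
        refine (abs_sub _ _).trans_eq ?_
        rw [abs_mul, abs_of_nonneg measureReal_nonneg]
    _ ≤ μ.real sᶜ * ∫ x, |f x| ∂μ + ∫ x in sᶜ, |f x| ∂μ := by
        gcongr <;> exact abs_integral_le_integral_abs
    _ = _ := add_comm _ _

lemma rpow_add_two_div_two {x : ℝ} (hx : 0 ≤ x) (n : ℕ) :
    x ^ (((n : ℝ) + 2) / 2) = √x ^ n * x := by
  rw [show ((n : ℝ) + 2) / 2 = (1 / 2 : ℝ) * ((n + 2 : ℕ) : ℝ) by push_cast; ring,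
    rpow_mul hx, ← sqrt_eq_rpow, rpow_natCast, pow_add, sq_sqrt hx]

lemma abs_pow_le_sqrt_pow_mul_exp (k : ℕ) (x : ℝ) : |x| ^ k ≤ √k ^ k * exp (x ^ 2 / 4) := by
  rcases Nat.eq_zero_or_pos k with rfl | hk
  · simpa using one_le_exp (by positivity)
  have hk' : (0 : ℝ) < k := by exact_mod_cast hk
  -- `y ≤ exp (y - 1)` at `y = x² / 2k`, together with `2 ≤ e`
  have habs : |x| ≤ √k * exp (x ^ 2 / (4 * k)) := by
    have hexp := add_one_le_exp (x ^ 2 / (2 * k) - 1)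
    have he : 2 ≤ exp 1 := by linarith [add_one_le_exp (1 : ℝ)]
    rw [exp_sub, sub_add_cancel, le_div_iff₀ (exp_pos 1)] at hexp
    have hsq : (√k * exp (x ^ 2 / (4 * k))) ^ 2 = k * exp (x ^ 2 / (2 * k)) := by
      rw [mul_pow, sq_sqrt hk'.le, ← exp_nat_mul]; congr 2; field_simp; ring
    have hx2 : x ^ 2 = 2 * k * (x ^ 2 / (2 * k)) := by field_simp
    rw [← pow_le_pow_iff_left₀ (abs_nonneg x) (by positivity) two_ne_zero, hsq, sq_abs]
    nlinarith [exp_pos (x ^ 2 / (2 * k))]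
  calc |x| ^ k ≤ (√k * exp (x ^ 2 / (4 * k))) ^ k := pow_le_pow_left₀ (abs_nonneg x) habs k
    _ = √k ^ k * exp (x ^ 2 / 4) := by
      rw [mul_pow, ← exp_nat_mul]; congr 2; field_simp

lemma integral_abs_pow_gaussianReal_le (k : ℕ) :
    ∫ x, |x| ^ k ∂gaussianReal 0 1 ≤ √2 * √k ^ k := by
  have hpdf (x : ℝ) : gaussianPDFReal 0 1 x = (√(2 * π))⁻¹ * exp (-x ^ 2 / 2) := by
    simp [gaussianPDFReal]
  have hbound (x : ℝ) : gaussianPDFReal 0 1 x • |x| ^ k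
      ≤ (√(2 * π))⁻¹ * √k ^ k * exp (-(1 / 4) * x ^ 2) := by
    calc gaussianPDFReal 0 1 x • |x| ^ k
        ≤ (√(2 * π))⁻¹ * exp (-x ^ 2 / 2) * (√k ^ k * exp (x ^ 2 / 4)) := by
          rw [smul_eq_mul, hpdf]; gcongr; exact abs_pow_le_sqrt_pow_mul_exp k x
      _ = (√(2 * π))⁻¹ * √k ^ k * exp (-(1 / 4) * x ^ 2) := by
          rw [mul_mul_mul_comm, ← exp_add]; ring_nf
  rw [integral_gaussianReal_eq_integral_smul one_ne_zero]
  refine (integral_mono_of_nonneg (ae_of_all _ fun x => ?_)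
    ((integrable_exp_neg_mul_sq (by norm_num)).const_mul _) (ae_of_all _ hbound)).trans_eq ?_
  · have := gaussianPDFReal_nonneg 0 1 x
    positivity
  rw [integral_const_mul, integral_gaussian, show π / (1 / 4) = 2 * (2 * π) by ring,
    sqrt_mul zero_le_two]
  field_simp
  rw [sqrt_mul (by positivity), sqrt_sq zero_le_two, sq_sqrt zero_le_two]

lemma integrable_pow_gaussianReal (k : ℕ) : Integrable (fun x : ℝ => x ^ k) (gaussianReal 0 1) :=
  (memLp_id_gaussianReal k).integrable_norm_pow'.mono' (by fun_prop)
    (ae_of_all _ fun x => by simp [norm_pow])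

lemma abs_integral_pow_gaussianReal_le (k : ℕ) :
    |∫ x, x ^ k ∂gaussianReal 0 1| ≤ (2 * √k) ^ k := by
  rcases Nat.eq_zero_or_pos k with rfl | hk
  · simp
  calc |∫ x, x ^ k ∂gaussianReal 0 1| ≤ ∫ x, |x| ^ k ∂gaussianReal 0 1 :=
        abs_integral_le_integral_abs.trans_eq (by simp only [abs_pow])
    _ ≤ √2 * √k ^ k := integral_abs_pow_gaussianReal_le k
    _ ≤ 2 ^ k * √k ^ k := by
        gcongr
        have h2k : 2 ≤ (2 : ℝ) ^ k := le_self_pow₀ one_le_two hk.ne'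
        linarith [sqrt_two_lt_three_halves]
    _ = (2 * √k) ^ k := (mul_pow _ _ _).symm

lemma setIntegral_Ioi_pow_mul_exp_le {k : ℕ} {t : ℝ} (ht : 0 < t) (hkt : k + t ≤ t ^ 2) :
    ∫ x in Ioi t, x ^ k * exp (-x ^ 2 / 2) ≤ t ^ k * exp (-t ^ 2 / 2) := by
  -- `x ≤ t e^{(x-t)/t}` and `-x²/2 ≤ -t²/2 - t(x-t)`; the hypothesis makes the total rate `≥ 1`
  have hpt : ∀ x ∈ Ioi t,
      x ^ k * exp (-x ^ 2 / 2) ≤ t ^ k * exp (-t ^ 2 / 2) * exp t * exp (-x) := by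
    intro x hx
    have hx : t < x := hx
    have hlin : x ≤ t * exp ((x - t) / t) := by
      have := add_one_le_exp ((x - t) / t)
      calc x = t * ((x - t) / t + 1) := by field_simp; ring
        _ ≤ t * exp ((x - t) / t) := by gcongr
    have hrate : k * ((x - t) / t) - x ^ 2 / 2 ≤ -t ^ 2 / 2 + t - x := by
      have hkt' : (k : ℝ) / t ≤ t - 1 := by rw [div_le_iff₀ ht]; nlinarith
      rw [show k * ((x - t) / t) = (k / t) * (x - t) by ring]
      nlinarith [sq_nonneg (x - t)]
    calc x ^ k * exp (-x ^ 2 / 2) ≤ (t * exp ((x - t) / t)) ^ k * exp (-x ^ 2 / 2) := by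
          gcongr; linarith
      _ = t ^ k * exp (k * ((x - t) / t) - x ^ 2 / 2) := by
          rw [mul_pow, ← exp_nat_mul, mul_assoc, ← exp_add]; ring_nf
      _ ≤ t ^ k * exp (-t ^ 2 / 2 + t - x) := by gcongr
      _ = t ^ k * exp (-t ^ 2 / 2) * exp t * exp (-x) := by
          rw [sub_eq_add_neg, exp_add, exp_add]; ring
  calc ∫ x in Ioi t, x ^ k * exp (-x ^ 2 / 2)
      ≤ ∫ x in Ioi t, t ^ k * exp (-t ^ 2 / 2) * exp t * exp (-x) :=
        integral_mono_of_nonneg (ae_restrict_of_forall_mem measurableSet_Ioi fun x hx => by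
            have : 0 < x := ht.trans hx
            positivity)
          ((integrableOn_exp_neg_Ioi t).const_mul _)
          (ae_restrict_of_forall_mem measurableSet_Ioi hpt)
    _ = t ^ k * exp (-t ^ 2 / 2) := by
        rw [integral_const_mul, integral_exp_neg_Ioi, mul_assoc, ← exp_add, add_neg_cancel,
          exp_zero, mul_one]

lemma setIntegral_compl_Icc_abs_pow_gaussianReal_le {k : ℕ} {t : ℝ} (ht : 0 < t)
    (hkt : k + t ≤ t ^ 2) :
    ∫ x in (Icc (-t) t)ᶜ, |x| ^ k ∂gaussianReal 0 1 ≤ t ^ k * exp (-t ^ 2 / 2) := by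
  set g := (Ioi t).indicator fun y => y ^ k * exp (-y ^ 2 / 2)
  have hg (x : ℝ) : gaussianPDFReal 0 1 x • (Icc (-t) t)ᶜ.indicator (fun x => |x| ^ k) x
      = (√(2 * π))⁻¹ * g |x| := by
    have hmem : x ∈ (Icc (-t) t)ᶜ ↔ |x| ∈ Ioi t := by
      simp only [mem_compl_iff, mem_Icc, mem_Ioi, ← abs_le, not_le]
    by_cases hx : x ∈ (Icc (-t) t)ᶜ
    · simp only [g, indicator_of_mem hx, indicator_of_mem (hmem.1 hx), gaussianPDFReal,
        NNReal.coe_one, mul_one, sub_zero, smul_eq_mul, sq_abs]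
      ring
    · simp [g, indicator_of_notMem hx, indicator_of_notMem (mt hmem.2 hx)]
  have hI : 0 ≤ ∫ x in Ioi t, x ^ k * exp (-x ^ 2 / 2) :=
    setIntegral_nonneg measurableSet_Ioi fun x hx => by
      have : 0 < x := ht.trans hx
      positivity
  have hc : (√(2 * π))⁻¹ ≤ 2⁻¹ :=
    inv_anti₀ two_pos ((le_sqrt zero_le_two (by positivity)).2 (by nlinarith [pi_gt_three]))
  rw [← integral_indicator measurableSet_Icc.compl,
    integral_gaussianReal_eq_integral_smul one_ne_zero]
  simp_rw [hg]
  rw [integral_const_mul, integral_comp_abs (f := g), setIntegral_indicator measurableSet_Ioi,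
    inter_eq_right.2 (Ioi_subset_Ioi ht.le)]
  calc (√(2 * π))⁻¹ * (2 * ∫ x in Ioi t, x ^ k * exp (-x ^ 2 / 2))
      ≤ 2⁻¹ * (2 * ∫ x in Ioi t, x ^ k * exp (-x ^ 2 / 2)) := by gcongr
    _ ≤ t ^ k * exp (-t ^ 2 / 2) := by
      linarith [setIntegral_Ioi_pow_mul_exp_le ht hkt]

lemma gaussianReal_real_compl_Icc_le {t : ℝ} (ht : 1 ≤ t) :
    (gaussianReal 0 1).real (Icc (-t) t)ᶜ ≤ exp (-t ^ 2 / 2) := by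
  simpa [measureReal_def] using
    setIntegral_compl_Icc_abs_pow_gaussianReal_le (k := 0) (by linarith) (by push_cast; nlinarith)

lemma four_fifths_le_gaussianReal_real_Icc {t : ℝ} (ht : 3 ≤ t) :
    4 / 5 ≤ (gaussianReal 0 1).real (Icc (-t) t) := by
  have htail := gaussianReal_real_compl_Icc_le (by linarith : 1 ≤ t)
  have hmass := measureReal_add_measureReal_compl (μ := gaussianReal 0 1)
    (measurableSet_Icc (a := -t) (b := t))
  rw [probReal_univ] at hmass
  -- `e^{t²/2} ≥ 1 + t²/2 ≥ 11/2`
  have hexp : exp (-t ^ 2 / 2) ≤ 1 / 5 := by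
    rw [neg_div, exp_neg, inv_le_comm₀ (exp_pos _) (by norm_num)]
    nlinarith [add_one_le_exp (t ^ 2 / 2)]
  linarith

noncomputable def truncGaussianMoment (t : ℝ) (k : ℕ) : ℝ :=
  (∫ x in Icc (-t) t, x ^ k ∂gaussianReal 0 1) / (gaussianReal 0 1).real (Icc (-t) t)

lemma truncGaussianMoment_zero {t : ℝ} (ht : 0 < t) : truncGaussianMoment t 0 = 1 := by
  have hpos : (gaussianReal 0 1) (Icc (-t) t) ≠ 0 := fun h =>
    ht.not_ge (by simpa using gaussianReal_absolutelyContinuous' 0 one_ne_zero h)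
  simp [truncGaussianMoment, measureReal_def, ENNReal.toReal_eq_zero_iff, hpos]

lemma abs_truncGaussianMoment_le {t : ℝ} (ht : 3 ≤ t) (k : ℕ) :
    |truncGaussianMoment t k| ≤ (2 * √k) ^ k := by
  rcases Nat.eq_zero_or_pos k with rfl | hk
  · simp [truncGaussianMoment_zero (by linarith : 0 < t)]
  have hp := four_fifths_le_gaussianReal_real_Icc ht
  have hM : |∫ x in Icc (-t) t, x ^ k ∂gaussianReal 0 1| ≤ √2 * √k ^ k :=
    calc |∫ x in Icc (-t) t, x ^ k ∂gaussianReal 0 1|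
        ≤ ∫ x in Icc (-t) t, |x| ^ k ∂gaussianReal 0 1 :=
          abs_integral_le_integral_abs.trans_eq (by simp only [abs_pow])
      _ ≤ ∫ x, |x| ^ k ∂gaussianReal 0 1 :=
          setIntegral_le_integral
            (by simpa only [abs_pow] using (integrable_pow_gaussianReal k).abs)
            (ae_of_all _ fun x => by positivity)
      _ ≤ √2 * √k ^ k := integral_abs_pow_gaussianReal_le k
  rw [truncGaussianMoment, abs_div, abs_of_pos (by linarith : 0 < (gaussianReal 0 1).real _),
    div_le_iff₀ (by linarith), mul_pow]
  have h2k : 2 ≤ (2 : ℝ) ^ k := le_self_pow₀ (one_le_two : (1 : ℝ) ≤ 2) hk.ne'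
  have hsk : 0 ≤ √k ^ k := by positivity
  have hpk : 8 / 5 ≤ 2 ^ k * (gaussianReal 0 1).real (Icc (-t) t) := by nlinarith
  nlinarith [mul_le_mul_of_nonneg_right hpk hsk, sqrt_two_lt_three_halves]

lemma abs_truncGaussianMoment_sub_le {t : ℝ} {k : ℕ} (ht : 3 ≤ t) (hkt : k + t ≤ t ^ 2) :
    |truncGaussianMoment t k - ∫ x, x ^ k ∂gaussianReal 0 1|
      ≤ 4 * k * t ^ k * exp (-t ^ 2 / 2) := by
  rcases Nat.eq_zero_or_pos k with rfl | hk
  · simp [truncGaussianMoment_zero (by linarith : 0 < t)]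
  have hp := four_fifths_le_gaussianReal_real_Icc ht
  have hq := gaussianReal_real_compl_Icc_le (by linarith : 1 ≤ t)
  have htail := setIntegral_compl_Icc_abs_pow_gaussianReal_le (by linarith) hkt
  have hL := integral_abs_pow_gaussianReal_le k
  have hkt' : √k ^ k ≤ t ^ k := by
    refine pow_le_pow_left₀ (sqrt_nonneg _) ?_ k
    exact (sqrt_le_sqrt (by linarith)).trans_eq (sqrt_sq (by linarith))
  have hmain := abs_setIntegral_div_measureReal_sub_integral_le measurableSet_Icc (by linarith)
    (integrable_pow_gaussianReal k)
  simp only [abs_pow] at hmain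
  refine hmain.trans ?_
  have hK := exp_pos (-t ^ 2 / 2)
  have hk1 : (1 : ℝ) ≤ k := by exact_mod_cast hk
  have htk : 0 ≤ t ^ k := by positivity
  rw [div_le_iff₀ (by linarith)]
  calc ∫ x in (Icc (-t) t)ᶜ, |x| ^ k ∂gaussianReal 0 1
        + (gaussianReal 0 1).real (Icc (-t) t)ᶜ * ∫ x, |x| ^ k ∂gaussianReal 0 1
      ≤ t ^ k * exp (-t ^ 2 / 2) + exp (-t ^ 2 / 2) * (3 / 2 * t ^ k) := by
        gcongr
        nlinarith [sqrt_two_lt_three_halves, pow_nonneg (sqrt_nonneg (k : ℝ)) k]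
    _ ≤ 4 * k * t ^ k * exp (-t ^ 2 / 2) * (gaussianReal 0 1).real (Icc (-t) t) := by
        nlinarith [mul_le_mul hk1 hp (by norm_num) (by positivity), mul_nonneg hK.le htk]

lemma setIntegral_prod_pow_stdGaussian_div_eq_prod {n : ℕ} (α : Fin n → ℕ) (t : ℝ) :
    (∫ x in {x : Fin n → ℝ | ∀ i, |x i| ≤ t}, ∏ i, x i ^ α i ∂stdGaussian n)
        / (stdGaussian n {x : Fin n → ℝ | ∀ i, |x i| ≤ t}).toReal
      = ∏ i, truncGaussianMoment t (α i) := by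
  have hbox : {x : Fin n → ℝ | ∀ i, |x i| ≤ t} = univ.pi fun _ => Icc (-t) t := by
    ext x; simp only [mem_ofPred_eq, mem_univ_pi, mem_Icc, abs_le]
  rw [hbox, _root_.stdGaussian, Measure.restrict_pi_pi,
    integral_fintype_prod_eq_prod (fun i y => y ^ α i), Measure.pi_pi,
    ENNReal.toReal_prod, ← Finset.prod_div_distrib]
  rfl

lemma abs_prod_truncGaussianMoment_sub_prod_le {ι : Type*} [Fintype ι] {α : ι → ℕ} {Δ : ℕ}
    {t : ℝ} (hΔ : 0 < Δ) (hα : ∑ i, α i ≤ Δ) (ht : 3 ≤ t) (hΔt : Δ + t ≤ t ^ 2) :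
    |∏ i, truncGaussianMoment t (α i) - ∏ i, ∫ x, x ^ α i ∂gaussianReal 0 1|
      ≤ 4 * Δ * t ^ Δ * exp (-t ^ 2 / 2) * (2 * √Δ) ^ Δ := by
  have hαΔ (i : ι) : α i ≤ Δ := (Finset.single_le_sum (fun j _ => Nat.zero_le (α j))
    (Finset.mem_univ i)).trans hα
  have hbase : 1 ≤ 2 * √(Δ : ℝ) := by
    have : 1 ≤ √(Δ : ℝ) := one_le_sqrt.2 (by exact_mod_cast hΔ)
    linarith
  have hc (i : ι) : (2 * √(α i : ℝ)) ^ α i ≤ (2 * √Δ) ^ α i := by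
    gcongr; exact_mod_cast hαΔ i
  refine (abs_prod_sub_prod_le Finset.univ (c := fun i => (2 * √Δ) ^ α i)
    (fun i _ => one_le_pow₀ hbase)
    (fun i _ => (abs_truncGaussianMoment_le ht _).trans (hc i))
    (fun i _ => (abs_integral_pow_gaussianReal_le _).trans (hc i))).trans ?_
  rw [Finset.prod_pow_eq_pow_sum]
  gcongr ?_ * ?_
  · calc ∑ i, |truncGaussianMoment t (α i) - ∫ x, x ^ α i ∂gaussianReal 0 1|
        ≤ ∑ i, 4 * α i * t ^ Δ * exp (-t ^ 2 / 2) := by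
          gcongr with i
          refine (abs_truncGaussianMoment_sub_le ht ?_).trans ?_
          · have : (α i : ℝ) ≤ Δ := by exact_mod_cast hαΔ i
            linarith
          · gcongr
            · linarith
            · exact hαΔ i
      _ ≤ 4 * Δ * t ^ Δ * exp (-t ^ 2 / 2) := by
          rw [← Finset.sum_mul, ← Finset.sum_mul, ← Finset.mul_sum]
          gcongr
          exact_mod_cast hα
  · exact pow_le_pow_right₀ hbase hα

/-- **Truncation does not change Gaussian moments much.** There is an absolute constant `C > 0`
such that for all positive integers `n, Δ`, every monomial `∏ᵢ xᵢ^{αᵢ}` of total degree at most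
`Δ`, and every real `t ≥ 2√Δ + 1`,
`|E_{x∼N(0,I)}[∏ xᵢ^{αᵢ} ∣ ∀ i, |xᵢ| ≤ t] − E_{x∼N(0,I)}[∏ xᵢ^{αᵢ}]|
  ≤ C · 2^Δ · Δ^{(Δ+2)/2} · t^Δ · e^{−t²/2}`.
The conditional expectation is written as the integral over the truncation event divided by the
probability of that event. -/
theorem gaussian_truncation_moment_close :
    ∃ C : ℝ, 0 < C ∧
      ∀ (n Δ : ℕ), 0 < n → 0 < Δ →
        ∀ (α : Fin n → ℕ), (∑ i, α i) ≤ Δ →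
          ∀ t : ℝ, 2 * Real.sqrt Δ + 1 ≤ t →
            |(∫ x in {x : Fin n → ℝ | ∀ i, |x i| ≤ t}, ∏ i, (x i) ^ (α i) ∂(stdGaussian n)) /
                ((stdGaussian n) {x : Fin n → ℝ | ∀ i, |x i| ≤ t}).toReal
              - ∫ x, ∏ i, (x i) ^ (α i) ∂(stdGaussian n)|
            ≤ C * 2 ^ Δ * (Δ : ℝ) ^ (((Δ : ℝ) + 2) / 2) * t ^ Δ * Real.exp (-(t ^ 2) / 2) := by
  refine ⟨4, four_pos, fun n Δ _ hΔ α hα t ht => ?_⟩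
  have hsqrt : 1 ≤ √(Δ : ℝ) := one_le_sqrt.2 (by exact_mod_cast hΔ)
  have hsq : √(Δ : ℝ) ^ 2 = Δ := sq_sqrt (Nat.cast_nonneg Δ)
  have ht3 : 3 ≤ t := by linarith
  have hΔt : Δ + t ≤ t ^ 2 := by nlinarith
  rw [setIntegral_prod_pow_stdGaussian_div_eq_prod, _root_.stdGaussian,
    integral_fintype_prod_eq_prod (fun i y => y ^ α i),
    rpow_add_two_div_two (Nat.cast_nonneg Δ)]
  refine (abs_prod_truncGaussianMoment_sub_prod_le hΔ hα ht3 hΔt).trans_eq ?_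
  rw [mul_pow, neg_div]
  ring
end

section
/- There exists n₀ such that for all integers n ≥ n₀ the following holds: if X₁ and X₂ are independent random vectors each distributed as the standard n-dimensional Gaussian N(0,I_{n×n}), then for every real r > 0, Pr[‖X₁ − X₂‖ ≤ r] ≤ 8ⁿ·(r²/n)^{n/2}. -/
open MeasureTheory ProbabilityTheory

/-!
Chernoff bound: for `t > 0`, `Pr[‖X₁ - X₂‖² ≤ r²] ≤ e^{t r²} · E[e^{-t ‖X₁ - X₂‖²}]`.
Conditionally on `X₁ = x` the expectation factors over the coordinates, and each factor
`E[e^{-t (xᵢ - Y)²}]`, `Y ~ N(0,1)`, is at most the maximum `1/√(2π)` of the normal density times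
`∫ e^{-t (xᵢ - y)²} dy = √(π/t)`, i.e. at most `1/√(2t)`. The choice `t = n/(2r²)` gives
`e^{n/2} (r²/n)^{n/2}`, and `e^{1/2} ≤ 8`.
-/

open Real
open scoped ENNReal NNReal

namespace ProbabilityTheory

lemma gaussianPDFReal_le (m : ℝ) (v : ℝ≥0) (x : ℝ) : gaussianPDFReal m v x ≤ (√(2 * π * v))⁻¹ :=
  mul_le_of_le_one_right (by positivity) <| exp_le_one_iff.2 <|
    div_nonpos_of_nonpos_of_nonneg (neg_nonpos.2 (sq_nonneg _)) (by positivity)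

lemma gaussianReal_le_smul_volume (m : ℝ) {v : ℝ≥0} (hv : v ≠ 0) :
    gaussianReal m v ≤ ENNReal.ofReal (√(2 * π * v))⁻¹ • volume := by
  rw [gaussianReal_of_var_ne_zero m hv, ← withDensity_const]
  exact withDensity_mono (ae_of_all _ fun x => ENNReal.ofReal_le_ofReal (gaussianPDFReal_le m v x))

end ProbabilityTheory

lemma lintegral_exp_neg_mul_sub_sq {t : ℝ} (ht : 0 < t) (x : ℝ) :
    ∫⁻ y, ENNReal.ofReal (exp (-t * (x - y) ^ 2)) = ENNReal.ofReal √(π / t) := by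
  rw [← ofReal_integral_eq_lintegral_ofReal _ (ae_of_all _ fun y => (exp_pos _).le),
    integral_sub_left_eq_self (fun y => exp (-t * y ^ 2)), integral_gaussian]
  exact (integrable_exp_neg_mul_sq ht).comp_sub_left x

lemma lintegral_exp_neg_mul_sub_sq_gaussianReal_le (m : ℝ) {v : ℝ≥0} (hv : v ≠ 0) {t : ℝ}
    (ht : 0 < t) (x : ℝ) :
    ∫⁻ y, ENNReal.ofReal (exp (-t * (x - y) ^ 2)) ∂gaussianReal m v
      ≤ ENNReal.ofReal (√(2 * t * v))⁻¹ :=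
  calc _ ≤ ∫⁻ y, ENNReal.ofReal (exp (-t * (x - y) ^ 2))
          ∂(ENNReal.ofReal (√(2 * π * v))⁻¹ • volume) :=
        lintegral_mono' (gaussianReal_le_smul_volume m hv) le_rfl
    _ = ENNReal.ofReal ((√(2 * π * v))⁻¹ * √(π / t)) := by
        rw [lintegral_smul_measure, lintegral_exp_neg_mul_sub_sq ht, smul_eq_mul,
          ← ENNReal.ofReal_mul (by positivity)]
    _ = ENNReal.ofReal (√(2 * t * v))⁻¹ := by
        congr 1
        rw [← sqrt_inv, ← sqrt_inv, ← sqrt_mul (by positivity)]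
        congr 1
        field_simp

lemma lintegral_pi_prod_eq_prod {ι : Type*} [Fintype ι] {α : ι → Type*}
    [∀ i, MeasurableSpace (α i)] (μ : ∀ i, Measure (α i)) [∀ i, IsProbabilityMeasure (μ i)]
    {f : ∀ i, α i → ℝ≥0∞} (hf : ∀ i, Measurable (f i)) :
    ∫⁻ x, ∏ i, f i (x i) ∂Measure.pi μ = ∏ i, ∫⁻ y, f i y ∂μ i := by
  rw [lintegral_prod_eq_prod_lintegral_of_indepFun _ _
    (iIndepFun_pi fun i => (hf i).aemeasurable) fun i => (hf i).comp (measurable_pi_apply i)]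
  exact Finset.prod_congr rfl fun i _ => (measurePreserving_eval μ i).lintegral_comp (hf i)

lemma measure_le_le_exp_mul_lintegral {α : Type*} [MeasurableSpace α] (μ : Measure α)
    {f : α → ℝ} (hf : Measurable f) (c : ℝ) {t : ℝ} (ht : 0 ≤ t) :
    μ {x | f x ≤ c} ≤ ENNReal.ofReal (exp (t * c)) * ∫⁻ x, ENNReal.ofReal (exp (-t * f x)) ∂μ := by
  rw [← lintegral_const_mul _ (by fun_prop),
    ← lintegral_indicator_one (s := {x | f x ≤ c}) (hf measurableSet_Iic)]
  refine lintegral_mono fun x => Set.indicator_apply_le' (fun hx => ?_) fun _ => zero_le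
  rw [Pi.one_apply, ← ENNReal.ofReal_mul (exp_pos _).le, ← exp_add]
  exact ENNReal.one_le_ofReal.2 (one_le_exp (by nlinarith [hx.out]))

lemma exp_half_mul_sqrt_pow_le (n : ℕ) {a : ℝ} (ha : 0 ≤ a) :
    exp (n / 2) * √a ^ n ≤ 8 ^ n * a ^ ((n : ℝ) / 2) := by
  have hexp : exp (n / 2) = exp (1 / 2) ^ n := by rw [← exp_nat_mul]; ring_nf
  have hsqrt : √a ^ n = a ^ ((n : ℝ) / 2) := by
    rw [sqrt_eq_rpow, ← rpow_natCast, ← rpow_mul ha]; ring_nf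
  rw [hexp, hsqrt]
  gcongr
  calc exp (1 / 2) ≤ exp 1 := exp_le_exp.2 (by norm_num)
    _ ≤ 8 := (exp_one_lt_d9.trans (by norm_num)).le

-- `_root_` avoids a clash with `ProbabilityTheory.stdGaussian` (on inner product spaces).
instance (n : ℕ) : IsProbabilityMeasure (stdGaussian n) := by
  unfold _root_.stdGaussian; infer_instance

lemma lintegral_exp_neg_mul_sqDist_stdGaussian_le {t : ℝ} (ht : 0 < t) {n : ℕ} (x : Fin n → ℝ) :
    ∫⁻ y, ENNReal.ofReal (exp (-t * ∑ i, (x i - y i) ^ 2)) ∂stdGaussian n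
      ≤ ENNReal.ofReal (√(2 * t))⁻¹ ^ n := by
  have hprod : ∀ y : Fin n → ℝ, ENNReal.ofReal (exp (-t * ∑ i, (x i - y i) ^ 2))
      = ∏ i, ENNReal.ofReal (exp (-t * (x i - y i) ^ 2)) := fun y => by
    rw [Finset.mul_sum, exp_sum, ENNReal.ofReal_prod_of_nonneg fun i _ => (exp_pos _).le]
  simp_rw [hprod]
  rw [_root_.stdGaussian, lintegral_pi_prod_eq_prod _
    (f := fun i v => ENNReal.ofReal (exp (-t * (x i - v) ^ 2))) fun i => by fun_prop]
  calc _ ≤ ∏ _i : Fin n, ENNReal.ofReal (√(2 * t))⁻¹ := Finset.prod_le_prod' fun i _ => by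
          simpa using lintegral_exp_neg_mul_sub_sq_gaussianReal_le 0 one_ne_zero ht (x i)
    _ = _ := by simp

lemma lintegral_exp_neg_mul_sqDist_stdGaussian_prod_le {t : ℝ} (ht : 0 < t) (n : ℕ) :
    ∫⁻ p, ENNReal.ofReal (exp (-t * ∑ i, (p.1 i - p.2 i) ^ 2))
        ∂(stdGaussian n).prod (stdGaussian n)
      ≤ ENNReal.ofReal (√(2 * t))⁻¹ ^ n := by
  rw [lintegral_prod _ (by fun_prop)]
  calc _ ≤ ∫⁻ _x, ENNReal.ofReal (√(2 * t))⁻¹ ^ n ∂stdGaussian n :=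
        lintegral_mono fun x => lintegral_exp_neg_mul_sqDist_stdGaussian_le ht x
    _ = _ := by simp

/-- **Two independent standard Gaussian points are far apart.** There exists `n₀` such that for
all `n ≥ n₀`: if `X₁, X₂` are independent standard `n`-dimensional Gaussians (modelled by the
product measure `stdGaussian n ⊗ stdGaussian n`), then for every real `r > 0`,
`Pr[‖X₁ − X₂‖ ≤ r] ≤ 8ⁿ·(r²/n)^{n/2}`, where `‖·‖` is the Euclidean norm. -/
theorem gaussian_points_far_apart :
    ∃ n₀ : ℕ, ∀ n : ℕ, n₀ ≤ n → ∀ r : ℝ, 0 < r →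
      (((stdGaussian n).prod (stdGaussian n))
          {p : (Fin n → ℝ) × (Fin n → ℝ) |
            Real.sqrt (∑ i, (p.1 i - p.2 i) ^ 2) ≤ r}).toReal
        ≤ 8 ^ n * (r ^ 2 / n) ^ ((n : ℝ) / 2) := by
  refine ⟨1, fun n hn r hr => ?_⟩
  have hn : (0 : ℝ) < n := by exact_mod_cast hn
  have ht : 0 < n / (2 * r ^ 2) := by positivity
  have hball : {p : (Fin n → ℝ) × (Fin n → ℝ) | √(∑ i, (p.1 i - p.2 i) ^ 2) ≤ r}
      = {p | ∑ i, (p.1 i - p.2 i) ^ 2 ≤ r ^ 2} := by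
    simp only [sqrt_le_left hr.le]
  have hchernoff := (measure_le_le_exp_mul_lintegral ((stdGaussian n).prod (stdGaussian n))
    (f := fun p => ∑ i, (p.1 i - p.2 i) ^ 2) (by fun_prop) (r ^ 2) ht.le).trans
    (mul_le_mul_right (lintegral_exp_neg_mul_sqDist_stdGaussian_prod_le ht n) _)
  have hexp : n / (2 * r ^ 2) * r ^ 2 = n / 2 := by field_simp
  have hsqrt : (√(2 * (n / (2 * r ^ 2))))⁻¹ = √(r ^ 2 / n) := by
    rw [← sqrt_inv]; congr 1; field_simp
  rw [hball]
  refine ENNReal.toReal_le_of_le_ofReal (by positivity) (hchernoff.trans_eq ?_) |>.trans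
    (exp_half_mul_sqrt_pow_le n (by positivity))
  rw [hexp, hsqrt, ← ENNReal.ofReal_pow (sqrt_nonneg _), ← ENNReal.ofReal_mul (exp_pos _).le]
end

section
/- Let 0 < a < b and let X₁, X₂ ∈ ℝⁿ be points with ‖X₁‖, ‖X₂‖ ∈ [a,b]. If ‖X₂ − X₁‖ > 2√(b² − a²), then the closed line segment connecting X₁ and X₂ intersects the closed ball B_a = {x ∈ ℝⁿ : ‖x‖ ≤ a}. -/
open Metric

/-! By the parallelogram law (Apollonius' theorem),
`‖(X₁ + X₂)/2‖² = (‖X₁‖² + ‖X₂‖²)/2 - ‖X₂ - X₁‖²/4 < b² - (b² - a²) = a²`,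
so already the midpoint of the segment lies in `B_a`. -/

section Apollonius

variable {V P : Type*} [NormedAddCommGroup V] [InnerProductSpace ℝ V] [MetricSpace P]
  [NormedAddTorsor V P]

theorem EuclideanGeometry.dist_midpoint_lt_of_two_sqrt_lt_dist {c x y : P} {a b : ℝ}
    (ha : 0 ≤ a) (hx : dist x c ≤ b) (hy : dist y c ≤ b)
    (hfar : 2 * √(b ^ 2 - a ^ 2) < dist x y) : dist (midpoint ℝ x y) c < a := by
  have hapollonius := dist_sq_add_dist_sq_eq_two_mul_dist_midpoint_sq_add_half_dist_sq c x y
  have hhalf : b ^ 2 - a ^ 2 < (dist x y / 2) ^ 2 :=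
    (Real.sqrt_lt' (by linarith [Real.sqrt_nonneg (b ^ 2 - a ^ 2)])).1 (by linarith)
  have hxb : dist c x ^ 2 ≤ b ^ 2 := by rw [dist_comm]; gcongr
  have hyb : dist c y ^ 2 ≤ b ^ 2 := by rw [dist_comm]; gcongr
  rw [dist_comm]
  exact (pow_lt_pow_iff_left₀ dist_nonneg ha two_ne_zero).1 (by linarith)

end Apollonius

theorem segment_meets_ball_general
    (n : ℕ) (a b : ℝ) (ha : 0 < a)
    (X₁ X₂ : EuclideanSpace ℝ (Fin n))
    (hX₁ : ‖X₁‖ ∈ Set.Icc a b) (hX₂ : ‖X₂‖ ∈ Set.Icc a b)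
    (hfar : 2 * Real.sqrt (b ^ 2 - a ^ 2) < ‖X₂ - X₁‖) :
    (segment ℝ X₁ X₂ ∩ closedBall (0 : EuclideanSpace ℝ (Fin n)) a).Nonempty := by
  refine ⟨midpoint ℝ X₁ X₂, midpoint_mem_segment X₁ X₂, mem_closedBall.2 ?_⟩
  rw [← dist_eq_norm'] at hfar
  rw [← dist_zero_right] at hX₁ hX₂
  exact (EuclideanGeometry.dist_midpoint_lt_of_two_sqrt_lt_dist ha.le hX₁.2 hX₂.2 hfar).le

/-- **If two points in a spherical shell are far apart, the segment between them meets the inner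
ball.** Let `0 < a < b` and let `X₁, X₂ ∈ ℝⁿ` with `‖X₁‖, ‖X₂‖ ∈ [a,b]`. If
`‖X₂ − X₁‖ > 2√(b² − a²)`, then the closed line segment connecting `X₁` and `X₂` intersects the
closed ball `B_a = {x : ‖x‖ ≤ a}`. -/
theorem segment_meets_ball
    (n : ℕ) (a b : ℝ) (ha : 0 < a) (hab : a < b)
    (X₁ X₂ : EuclideanSpace ℝ (Fin n))
    (hX₁ : ‖X₁‖ ∈ Set.Icc a b) (hX₂ : ‖X₂‖ ∈ Set.Icc a b)
    (hfar : 2 * Real.sqrt (b ^ 2 - a ^ 2) < ‖X₂ - X₁‖) :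
    (segment ℝ X₁ X₂ ∩ closedBall (0 : EuclideanSpace ℝ (Fin n)) a).Nonempty :=
  segment_meets_ball_general n a b ha X₁ X₂ hX₁ hX₂ hfar
end

section
/- Let a > 0 and let x₁, x₂ ∈ ℝⁿ be points with x₁ ∉ B_a and x₂ ∉ B_a, where B_a = {x ∈ ℝⁿ : ‖x‖ ≤ a}. If the closed line segment connecting x₁ and x₂ intersects B_a, then conv({x₁} ∪ B_a) ∩ conv({x₂} ∪ B_a) = B_a. -/
open Metric

/-- **If the segment between two points meets the ball, then the two cones over the ball
intersect only in the ball.** Let `a > 0` and let `x₁, x₂ ∈ ℝⁿ` with `x₁, x₂ ∉ B_a`, where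
`B_a` is the closed ball of radius `a` about the origin. If the closed line segment connecting
`x₁` and `x₂` intersects `B_a`, then
`conv({x₁} ∪ B_a) ∩ conv({x₂} ∪ B_a) = B_a`. -/
theorem cones_intersect_in_ball
    (n : ℕ) (a : ℝ) (ha : 0 < a)
    (x₁ x₂ : EuclideanSpace ℝ (Fin n))
    (hx₁ : x₁ ∉ closedBall (0 : EuclideanSpace ℝ (Fin n)) a)
    (hx₂ : x₂ ∉ closedBall (0 : EuclideanSpace ℝ (Fin n)) a)
    (hseg : (segment ℝ x₁ x₂ ∩ closedBall (0 : EuclideanSpace ℝ (Fin n)) a).Nonempty) :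
    convexHull ℝ ({x₁} ∪ closedBall (0 : EuclideanSpace ℝ (Fin n)) a) ∩
      convexHull ℝ ({x₂} ∪ closedBall (0 : EuclideanSpace ℝ (Fin n)) a)
      = closedBall (0 : EuclideanSpace ℝ (Fin n)) a := by
  set B := closedBall (0 : EuclideanSpace ℝ (Fin n)) a with hB
  have hBne : B.Nonempty := ⟨0, by simp [hB, ha.le]⟩
  have hBconv : Convex ℝ B := convex_closedBall _ _
  have hhull : ∀ x : EuclideanSpace ℝ (Fin n),
      convexHull ℝ ({x} ∪ B) = convexJoin ℝ {x} B := by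
    intro x
    rw [Set.singleton_union, convexHull_insert hBne, hBconv.convexHull_eq]
  obtain ⟨y, hyseg, hyB⟩ := hseg
  obtain ⟨s, s', hs, hs', hss, hy⟩ := hyseg
  -- s > 0 and s' > 0
  have hs0 : 0 < s := by
    rcases hs.lt_or_eq with h | h
    · exact h
    · exfalso; apply hx₂
      have h1 : s' = 1 := by linarith
      rw [← h, h1] at hy; simp at hy; rwa [← hy] at hyB
  have hs'0 : 0 < s' := by
    rcases hs'.lt_or_eq with h | h
    · exact h
    · exfalso; apply hx₁
      have h1 : s = 1 := by linarith
      rw [← h, h1] at hy; simp at hy; rwa [← hy] at hyB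
  apply Set.Subset.antisymm
  · rintro z ⟨hz₁, hz₂⟩
    rw [hhull, mem_convexJoin] at hz₁ hz₂
    obtain ⟨x₁', hx₁', b₁, hb₁, hzseg₁⟩ := hz₁
    obtain ⟨x₂', hx₂', b₂, hb₂, hzseg₂⟩ := hz₂
    rw [Set.mem_singleton_iff] at hx₁' hx₂'
    subst hx₁' hx₂'
    obtain ⟨t₁, u₁, ht₁, hu₁, htu₁, hz1⟩ := hzseg₁
    obtain ⟨t₂, u₂, ht₂, hu₂, htu₂, hz2⟩ := hzseg₂
    -- handle degenerate cases
    rcases eq_or_lt_of_le ht₁ with h | ht₁pos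
    · have : u₁ = 1 := by linarith
      rw [← hz1, ← h, this]; simpa using hb₁
    rcases eq_or_lt_of_le ht₂ with h | ht₂pos
    · have : u₂ = 1 := by linarith
      rw [← hz2, ← h, this]; simpa using hb₂
    -- main case
    have key : (s * t₂ + s' * t₁) • z
        = (t₁ * t₂) • y + (s * u₁ * t₂) • b₁ + (s' * u₂ * t₁) • b₂ := by
      linear_combination (norm := module) (-(s * t₂)) • hz1 - (s' * t₁) • hz2 + (t₁ * t₂) • hy
    have hlam : 0 < s * t₂ + s' * t₁ := by positivity
    have hnorm : (s * t₂ + s' * t₁) * ‖z‖ ≤ (s * t₂ + s' * t₁) * a := by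
      calc (s * t₂ + s' * t₁) * ‖z‖ = ‖(s * t₂ + s' * t₁) • z‖ := by
            rw [norm_smul, Real.norm_eq_abs, abs_of_pos hlam]
        _ = ‖(t₁ * t₂) • y + (s * u₁ * t₂) • b₁ + (s' * u₂ * t₁) • b₂‖ := by rw [key]
        _ ≤ ‖(t₁ * t₂) • y‖ + ‖(s * u₁ * t₂) • b₁‖ + ‖(s' * u₂ * t₁) • b₂‖ :=
            norm_add₃_le
        _ ≤ (t₁ * t₂) * a + (s * u₁ * t₂) * a + (s' * u₂ * t₁) * a := by
            have h1 : ‖y‖ ≤ a := by simpa [hB] using hyB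
            have h2 : ‖b₁‖ ≤ a := by simpa [hB] using hb₁
            have h3 : ‖b₂‖ ≤ a := by simpa [hB] using hb₂
            have e1 : ‖(t₁ * t₂) • y‖ = (t₁*t₂) * ‖y‖ := by
              rw [norm_smul, Real.norm_eq_abs, abs_of_nonneg (by positivity)]
            have e2 : ‖(s * u₁ * t₂) • b₁‖ = (s*u₁*t₂) * ‖b₁‖ := by
              rw [norm_smul, Real.norm_eq_abs, abs_of_nonneg (by positivity)]
            have e3 : ‖(s' * u₂ * t₁) • b₂‖ = (s'*u₂*t₁) * ‖b₂‖ := by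
              rw [norm_smul, Real.norm_eq_abs, abs_of_nonneg (by positivity)]
            rw [e1, e2, e3]
            gcongr
        _ = (s * t₂ + s' * t₁) * a := by linear_combination a*s*t₂*htu₁ + a*s'*t₁*htu₂ - a*t₁*t₂*hss
    have := le_of_mul_le_mul_left hnorm hlam
    simpa [hB] using this
  · intro z hz
    exact ⟨subset_convexHull ℝ _ (Set.mem_union_right _ hz),
      subset_convexHull ℝ _ (Set.mem_union_right _ hz)⟩
end

section
/- Let U be a measurable space, D a probability distribution on U, g : U → {±1} a measurable function, N a positive integer, and p : (U × {±1})^N → [0,1] a measurable function (representing the acceptance probability of a tester given N labeled samples). Suppose that E_{x₁,…,x_N iid ∼ D}[p((x₁,g(x₁)), …, (x_N,g(x_N)))] ≥ 1 − δ₂. Let S = (z₁, …, z_M) consist of M i.i.d. draws from D. Then for every Δ ∈ (0,1), with probability at least 1 − Δ over the choice of S, the quantity E_{i₁,…,i_N iid uniform on {1,…,M}}[p((z_{i₁}, g(z_{i₁})), …, (z_{i_N}, g(z_{i_N})))] is at least 1 − δ₂ − N²/M − N/√(Δ·M). -/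
/-!
For an index tuple `i : Fin N → Fin M`, the tester run on `z ∘ i` sees a fresh i.i.d. sample when
`i` is injective, and two index tuples with disjoint ranges give independent runs. At most
`N² M^(N-1)` tuples are non-injective and at most `N² M^(2N-1)` pairs of tuples overlap, so the
resampled acceptance probability has mean at least `1 - δ₂ - N²/M` and variance at most `N²/M`.
Chebyshev's inequality at deviation `N/√(ΔM)` concludes.
-/

open MeasureTheory ProbabilityTheory Finset Function

section Counting

variable {α β : Type*} [Fintype α] [DecidableEq α] [Fintype β] [DecidableEq β]

lemma card_filter_apply_eq_apply_mul_le {a b : α} (hab : a ≠ b) :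
    #{f : α → β | f a = f b} * Fintype.card β ≤ Fintype.card β ^ Fintype.card α := by
  calc #{f : α → β | f a = f b} * Fintype.card β
      = #(({f : α → β | f a = f b} : Finset (α → β)) ×ˢ (univ : Finset β)) := by
        rw [card_product, card_univ]
    _ ≤ #(univ : Finset (α → β)) := by
      -- `update f b y` forgets nothing: `y` is its value at `b`, and `f b = f a`.
      refine card_le_card_of_injOn (fun q => update q.1 b q.2) (by simp) ?_
      rintro ⟨f, y⟩ hf ⟨f', y'⟩ hf' heq
      simp only [coe_product, Set.mem_prod, mem_coe, mem_filter, mem_univ, true_and] at hf hf'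
      have hy : y = y' := by simpa using congrFun heq b
      refine Prod.ext (funext fun x => ?_) hy
      by_cases hx : x = b
      · subst hx
        simpa [hf, hf', hab] using congrFun heq a
      · simpa [hx] using congrFun heq x
    _ = Fintype.card β ^ Fintype.card α := by simp

lemma card_filter_exists_apply_eq_apply_mul_le {γ : Type*} (s : Finset γ) {a b : γ → α}
    (hab : ∀ c ∈ s, a c ≠ b c) :
    #{f : α → β | ∃ c ∈ s, f (a c) = f (b c)} * Fintype.card β
      ≤ #s * Fintype.card β ^ Fintype.card α := by
  have hcover : ({f : α → β | ∃ c ∈ s, f (a c) = f (b c)} : Finset (α → β))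
      = s.biUnion fun c => {f : α → β | f (a c) = f (b c)} := by
    ext f; simp
  calc #{f : α → β | ∃ c ∈ s, f (a c) = f (b c)} * Fintype.card β
      ≤ (∑ c ∈ s, #{f : α → β | f (a c) = f (b c)}) * Fintype.card β := by
        rw [hcover]; gcongr; exact card_biUnion_le
    _ ≤ ∑ _c ∈ s, Fintype.card β ^ Fintype.card α := by
        rw [sum_mul]
        exact sum_le_sum fun c hc => card_filter_apply_eq_apply_mul_le (hab c hc)
    _ = #s * Fintype.card β ^ Fintype.card α := by rw [sum_const, smul_eq_mul]

lemma card_filter_not_injective_mul_le :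
    #{f : α → β | ¬Injective f} * Fintype.card β
      ≤ Fintype.card α ^ 2 * Fintype.card β ^ Fintype.card α := by
  have hfilter : #{f : α → β | ¬Injective f}
      = #{f : α → β | ∃ c ∈ (univ : Finset α).offDiag, f c.1 = f c.2} := by
    congr 1; ext f; simp [not_injective_iff, and_comm]
  have hoffDiag : #(univ : Finset α).offDiag ≤ Fintype.card α ^ 2 := by
    rw [offDiag_card, card_univ, sq]; exact Nat.sub_le _ _
  rw [hfilter]
  calc _ ≤ #(univ : Finset α).offDiag * Fintype.card β ^ Fintype.card α :=
        card_filter_exists_apply_eq_apply_mul_le _ fun c hc => (mem_offDiag.1 hc).2.2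
    _ ≤ _ := by gcongr

lemma card_filter_exists_fst_apply_eq_snd_apply_mul_le :
    #{q : (α → β) × (α → β) | ∃ a a', q.1 a = q.2 a'} * Fintype.card β
      ≤ Fintype.card α ^ 2 * Fintype.card β ^ (2 * Fintype.card α) := by
  have hcard : #{q : (α → β) × (α → β) | ∃ a a', q.1 a = q.2 a'}
      = #{f : α ⊕ α → β | ∃ c ∈ (univ : Finset (α × α)), f (.inl c.1) = f (.inr c.2)} :=
    card_equiv (Equiv.sumArrowEquivProdArrow α α β).symm fun q => by
      simp [Equiv.sumArrowEquivProdArrow]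
  rw [hcard]
  calc _ ≤ #(univ : Finset (α × α)) * Fintype.card β ^ Fintype.card (α ⊕ α) :=
        card_filter_exists_apply_eq_apply_mul_le _ fun _ _ => Sum.inl_ne_inr
    _ = _ := by rw [card_univ, Fintype.card_prod, Fintype.card_sum, sq, two_mul]

end Counting

section ProductMeasure

variable {U α α' β : Type*} [MeasurableSpace U] (D : Measure U) [IsProbabilityMeasure D]
  [Fintype α] [Fintype α'] [Fintype β]

lemma measurePreserving_pi_comp_of_injective {e : α → β} (he : Injective e) :
    MeasurePreserving (fun z : β → U => z ∘ e) (Measure.pi fun _ => D)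
      (Measure.pi fun _ => D) := by
  have hindep : iIndepFun (fun a (z : β → U) => z (e a)) (Measure.pi fun _ => D) :=
    (iIndepFun_pi (X := fun _ : β => id) fun _ => aemeasurable_id).precomp he
  refine ⟨by fun_prop, ?_⟩
  change Measure.map (fun (z : β → U) a => z (e a)) _ = _
  rw [(iIndepFun_iff_map_fun_eq_pi_map fun a => (measurable_pi_apply (e a)).aemeasurable).1
    hindep]
  congr 1
  funext a
  exact (measurePreserving_eval _ (e a)).map_eq

lemma integral_pi_comp_of_injective {E : Type*} [NormedAddCommGroup E] [NormedSpace ℝ E]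
    {P : (α → U) → E} (hP : AEStronglyMeasurable P (Measure.pi fun _ => D)) {e : α → β}
    (he : Injective e) :
    ∫ z, P (z ∘ e) ∂(Measure.pi fun _ => D) = ∫ x, P x ∂(Measure.pi fun _ => D) := by
  have hmp := measurePreserving_pi_comp_of_injective D he
  rw [← integral_map hmp.measurable.aemeasurable (hmp.map_eq ▸ hP), hmp.map_eq]

lemma indepFun_pi_comp_of_disjoint_range {e : α → β} {e' : α' → β}
    (h : Disjoint (Set.range e) (Set.range e')) :
    IndepFun (fun z : β → U => z ∘ e) (fun z => z ∘ e') (Measure.pi fun _ => D) := by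
  classical
  have hST : Disjoint (univ.image e) (univ.image e') := by
    rw [← disjoint_coe]; simpa using h
  have hindep := (iIndepFun_pi (μ := fun _ : β => D) (X := fun _ => id)
    fun _ => aemeasurable_id).indepFun_finset _ _ hST fun b => measurable_pi_apply b
  exact hindep.comp (φ := fun w a => w ⟨e a, mem_image_of_mem e (mem_univ a)⟩)
    (ψ := fun w a => w ⟨e' a, mem_image_of_mem e' (mem_univ a)⟩) (by fun_prop) (by fun_prop)

end ProductMeasure

section Moments

variable {Ω ι : Type*} [MeasurableSpace Ω] {μ : Measure Ω} [IsProbabilityMeasure μ]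

lemma memLp_of_mem_Icc {X : Ω → ℝ} (hX : Measurable X) (hX01 : ∀ ω, X ω ∈ Set.Icc 0 1)
    (p : ENNReal) : MemLp X p μ :=
  memLp_of_bounded (.of_forall hX01) hX.aestronglyMeasurable p

lemma covariance_le_one_of_mem_Icc {X Y : Ω → ℝ} (hX : Measurable X) (hY : Measurable Y)
    (hX01 : ∀ ω, X ω ∈ Set.Icc 0 1) (hY01 : ∀ ω, Y ω ∈ Set.Icc 0 1) :
    cov[X, Y; μ] ≤ 1 := by
  have hXY : μ[X * Y] ≤ 1 := by
    have hle : ∀ ω, (X * Y) ω ≤ 1 := fun ω =>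
      mul_le_one₀ (hX01 ω).2 (hY01 ω).1 (hY01 ω).2
    simpa using integral_mono ((memLp_of_mem_Icc (μ := μ) (hX.mul hY) (fun ω =>
      ⟨mul_nonneg (hX01 ω).1 (hY01 ω).1, hle ω⟩) 1).integrable le_rfl)
      (integrable_const 1) hle
  rw [covariance_eq_sub (memLp_of_mem_Icc hX hX01 2) (memLp_of_mem_Icc hY hY01 2)]
  have := mul_nonneg (integral_nonneg (μ := μ) (f := X) fun ω => (hX01 ω).1)
    (integral_nonneg (μ := μ) (f := Y) fun ω => (hY01 ω).1)
  linarith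

lemma variance_sum_le_card_of_indepFun [Fintype ι] {X : ι → Ω → ℝ} (hX : ∀ i, Measurable (X i))
    (hX01 : ∀ i ω, X i ω ∈ Set.Icc 0 1) (R : ι → ι → Prop) [DecidableRel R]
    (hR : ∀ i j, ¬R i j → IndepFun (X i) (X j) μ) :
    Var[fun ω => ∑ i, X i ω; μ] ≤ #{q : ι × ι | R q.1 q.2} := by
  have hcov : ∀ i j, cov[X i, X j; μ] ≤ if R i j then 1 else 0 := fun i j => by
    split_ifs with hij
    · exact covariance_le_one_of_mem_Icc (hX i) (hX j) (hX01 i) (hX01 j)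
    · exact ((hR i j hij).covariance_eq_zero (memLp_of_mem_Icc (hX i) (hX01 i) 2)
        (memLp_of_mem_Icc (hX j) (hX01 j) 2)).le
  calc Var[fun ω => ∑ i, X i ω; μ] = ∑ i, ∑ j, cov[X i, X j; μ] :=
        variance_fun_sum fun i => memLp_of_mem_Icc (hX i) (hX01 i) 2
    _ ≤ ∑ i, ∑ j, if R i j then (1 : ℝ) else 0 := by gcongr with i _ j _; exact hcov i j
    _ = #{q : ι × ι | R q.1 q.2} := by
        rw [← Fintype.sum_prod_type', sum_boole]

lemma one_sub_variance_div_sq_le_measureReal {X : Ω → ℝ} (hX : MemLp X 2 μ) {c : ℝ}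
    (hc : 0 < c) :
    1 - Var[X; μ] / c ^ 2 ≤ μ.real {ω | μ[X] - c ≤ X ω} := by
  have hchebyshev : μ.real {ω | c ≤ |X ω - μ[X]|} ≤ Var[X; μ] / c ^ 2 :=
    ENNReal.toReal_le_of_le_ofReal (div_nonneg (variance_nonneg _ _) (sq_nonneg _))
      (meas_ge_le_variance_div_sq hX hc)
  have hcover : Set.univ ⊆ {ω | μ[X] - c ≤ X ω} ∪ {ω | c ≤ |X ω - μ[X]|} := fun ω _ => by
    rcases le_or_gt (μ[X] - c) (X ω) with h | h
    · exact .inl h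
    · refine .inr ((by linarith : c ≤ μ[X] - X ω).trans ?_)
      rw [abs_sub_comm]
      exact le_abs_self _
  have := (measureReal_mono hcover).trans (measureReal_union_le (μ := μ) _ _)
  rw [probReal_univ] at this
  linarith

end Moments

section Resample

variable {U α β : Type*} [Fintype α] [DecidableEq α] [Fintype β] {P : (α → U) → ℝ}

noncomputable def resampleMean (P : (α → U) → ℝ) (z : β → U) : ℝ :=
  (1 / (Fintype.card β : ℝ) ^ Fintype.card α) * ∑ i : α → β, P (z ∘ i)

lemma resampleMean_mem_Icc (hP01 : ∀ x, P x ∈ Set.Icc 0 1) (z : β → U) :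
    resampleMean P z ∈ Set.Icc 0 1 := by
  have hsum : ∑ i : α → β, P (z ∘ i) ≤ (Fintype.card β : ℝ) ^ Fintype.card α := by
    calc ∑ i : α → β, P (z ∘ i) ≤ ∑ _i : α → β, (1 : ℝ) := sum_le_sum fun i _ => (hP01 _).2
      _ = _ := by simp
  refine ⟨mul_nonneg (by positivity) (sum_nonneg fun i _ => (hP01 _).1), ?_⟩
  rcases eq_or_lt_of_le (by positivity : (0 : ℝ) ≤ (Fintype.card β : ℝ) ^ Fintype.card α)
    with h | h
  · simp [resampleMean, ← h]
  · rw [resampleMean, one_div_mul_eq_div]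
    exact div_le_one_of_le₀ hsum h.le

variable [MeasurableSpace U] (D : Measure U) [IsProbabilityMeasure D]

lemma measurable_resampleMean (hP : Measurable P) : Measurable (resampleMean (β := β) P) :=
  measurable_const.mul (Finset.measurable_sum _ fun i _ => hP.comp (by fun_prop))

lemma sub_le_integral_resampleMean [Nonempty β] (hP : Measurable P)
    (hP01 : ∀ x, P x ∈ Set.Icc 0 1) :
    ∫ x, P x ∂(Measure.pi fun _ => D) - (Fintype.card α : ℝ) ^ 2 / Fintype.card β
      ≤ ∫ z, resampleMean P z ∂(Measure.pi fun _ : β => D) := by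
  classical
  set A := ∫ x, P x ∂(Measure.pi fun _ => D)
  set K := (Fintype.card β : ℝ) ^ Fintype.card α
  have hK : 0 < K := by positivity
  have hterm : ∀ i : α → β,
      A - (if Injective i then 0 else 1) ≤ ∫ z, P (z ∘ i) ∂(Measure.pi fun _ => D) := fun i => by
    split_ifs with hi
    · rw [sub_zero, integral_pi_comp_of_injective D hP.aestronglyMeasurable hi]
    · have hA : A ≤ 1 := by
        simpa using integral_mono (μ := Measure.pi fun _ => D)
          ((memLp_of_mem_Icc hP hP01 1).integrable le_rfl) (integrable_const 1)
          fun x => (hP01 x).2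
      linarith [integral_nonneg (μ := Measure.pi fun _ : β => D) (f := fun z => P (z ∘ i))
        fun z => (hP01 (z ∘ i)).1]
  have hcount : (#{i : α → β | ¬Injective i} : ℝ) * Fintype.card β
      ≤ (Fintype.card α : ℝ) ^ 2 * K := by
    have := card_filter_not_injective_mul_le (α := α) (β := β)
    simp only [K]
    exact_mod_cast this
  calc A - (Fintype.card α : ℝ) ^ 2 / Fintype.card β
      ≤ A - #{i : α → β | ¬Injective i} / K := by
        refine sub_le_sub_left ?_ A
        rw [div_le_div_iff₀ hK (by positivity)]
        linarith
    _ = 1 / K * ∑ i : α → β, (A - if Injective i then 0 else 1) := by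
        rw [sum_sub_distrib, sum_const, card_univ, Fintype.card_fun, nsmul_eq_mul, sum_ite,
          sum_const_zero, sum_const, nsmul_eq_mul, mul_one, zero_add]
        field_simp
        push_cast
        ring
    _ ≤ 1 / K * ∑ i : α → β, ∫ z, P (z ∘ i) ∂(Measure.pi fun _ => D) := by
        gcongr with i; exact hterm i
    _ = ∫ z, resampleMean P z ∂(Measure.pi fun _ : β => D) := by
        change _ = ∫ z, 1 / K * ∑ i : α → β, P (z ∘ i) ∂_
        rw [integral_const_mul, integral_finsetSum (f := fun i z => P (z ∘ i)) _ fun i _ =>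
          (memLp_of_mem_Icc (hP.comp (by fun_prop)) (fun z => hP01 (z ∘ i)) 1).integrable le_rfl]

lemma variance_resampleMean_le [Nonempty β] (hP : Measurable P)
    (hP01 : ∀ x, P x ∈ Set.Icc 0 1) :
    Var[resampleMean P; Measure.pi fun _ : β => D]
      ≤ (Fintype.card α : ℝ) ^ 2 / Fintype.card β := by
  classical
  set K := (Fintype.card β : ℝ) ^ Fintype.card α
  have hsum : Var[fun z => ∑ i : α → β, P (z ∘ i); Measure.pi fun _ => D]
      ≤ #{q : (α → β) × (α → β) | ∃ a a', q.1 a = q.2 a'} := by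
    refine variance_sum_le_card_of_indepFun (X := fun i z => P (z ∘ i))
      (fun i => hP.comp (by fun_prop)) (fun i z => hP01 (z ∘ i))
      (fun i j : α → β => ∃ a a', i a = j a') fun i j hij => ?_
    refine (indepFun_pi_comp_of_disjoint_range D ?_).comp hP hP
    exact Set.disjoint_range_iff.2 fun a a' h => hij ⟨a, a', h⟩
  have hcount : (#{q : (α → β) × (α → β) | ∃ a a', q.1 a = q.2 a'} : ℝ) * Fintype.card β
      ≤ (Fintype.card α : ℝ) ^ 2 * K ^ 2 := by
    have := card_filter_exists_fst_apply_eq_snd_apply_mul_le (α := α) (β := β)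
    simp only [K, ← pow_mul, mul_comm _ 2]
    exact_mod_cast this
  calc Var[resampleMean P; Measure.pi fun _ : β => D]
      = (1 / K) ^ 2 * Var[fun z => ∑ i : α → β, P (z ∘ i); Measure.pi fun _ => D] :=
        variance_const_mul _ _ _
    _ ≤ (1 / K) ^ 2 * #{q : (α → β) × (α → β) | ∃ a a', q.1 a = q.2 a'} := by gcongr
    _ ≤ (Fintype.card α : ℝ) ^ 2 / Fintype.card β := by
        rw [div_pow, one_pow, one_div_mul_eq_div, div_le_div_iff₀ (by positivity) (by positivity)]
        linarith

end Resample

/-- **Tester fooling lemma.** Let `U` be a measurable space, `D` a probability distribution on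
`U`, `g : U → {±1}` measurable (labels encoded by `Bool`), `N` a positive integer, and
`p : (U × {±1})^N → [0,1]` a measurable function giving the acceptance probability of a tester
on each tuple of `N` labeled samples. Suppose the tester accepts `N` i.i.d. `g`-labeled samples
from `D` with probability at least `1 − δ₂`. Let `S = (z₁, …, z_M)` be `M` i.i.d. draws from
`D`. Then for every `Δ ∈ (0,1)`, with probability at least `1 − Δ` over `S`, the acceptance
probability of the tester on `N` samples drawn i.i.d. uniformly from `S` (labeled by `g`) is at
least `1 − δ₂ − N²/M − N/√(Δ·M)`. -/
theorem tester_fooling_lemma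
    (U : Type*) [MeasurableSpace U] (D : Measure U) (hD : IsProbabilityMeasure D)
    (g : U → Bool) (hg : Measurable g)
    (N M : ℕ) (hN : 0 < N) (hM : 0 < M)
    (p : (Fin N → U × Bool) → ℝ) (hp : Measurable p)
    (hp01 : ∀ s, p s ∈ Set.Icc (0 : ℝ) 1)
    (δ₂ : ℝ)
    (hacc : 1 - δ₂ ≤ ∫ xs, p (fun j => (xs j, g (xs j))) ∂(Measure.pi fun _ : Fin N => D))
    (Δ : ℝ) (hΔ : Δ ∈ Set.Ioo (0 : ℝ) 1) :
    1 - Δ ≤ ((Measure.pi fun _ : Fin M => D)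
        {z : Fin M → U |
          1 - δ₂ - (N : ℝ) ^ 2 / M - N / Real.sqrt (Δ * M) ≤
            (1 / (M : ℝ) ^ N) *
              ∑ i : Fin N → Fin M, p (fun j => (z (i j), g (z (i j))))}).toReal := by
  set P : (Fin N → U) → ℝ := fun xs => p fun j => (xs j, g (xs j))
  have hP : Measurable P := hp.comp (by fun_prop)
  have hP01 : ∀ xs, P xs ∈ Set.Icc 0 1 := fun xs => hp01 _
  have : Nonempty (Fin M) := ⟨⟨0, hM⟩⟩
  have hmean := sub_le_integral_resampleMean (β := Fin M) D hP hP01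
  have hvar := variance_resampleMean_le (β := Fin M) D hP hP01
  simp only [Fintype.card_fin] at hmean hvar
  have hΔM : 0 < Δ * M := mul_pos hΔ.1 (by exact_mod_cast hM)
  set c := N / Real.sqrt (Δ * M)
  have hc : 0 < c := div_pos (by exact_mod_cast hN) (Real.sqrt_pos.2 hΔM)
  have hratio : Var[resampleMean P; Measure.pi fun _ : Fin M => D] / c ^ 2 ≤ Δ := by
    rw [div_le_iff₀ (pow_pos hc 2), div_pow, Real.sq_sqrt hΔM.le]
    calc _ ≤ (N : ℝ) ^ 2 / M := hvar
      _ = _ := by field_simp [hΔ.1.ne']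
  calc 1 - Δ ≤ 1 - Var[resampleMean P; Measure.pi fun _ : Fin M => D] / c ^ 2 := by linarith
    _ ≤ _ := one_sub_variance_div_sq_le_measureReal
        (memLp_of_mem_Icc (measurable_resampleMean hP) (resampleMean_mem_Icc hP01) 2) hc
    _ ≤ _ := measureReal_mono fun z (hz : _ - c ≤ resampleMean P z) => by
        have hz' : resampleMean P z = 1 / (M : ℝ) ^ N * ∑ i : Fin N → Fin M, P (z ∘ i) := by
          simp only [resampleMean, Fintype.card_fin]
        change _ ≤ 1 / (M : ℝ) ^ N * ∑ i : Fin N → Fin M, P (z ∘ i)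
        linarith
end
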